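/- Let G be the group of order p^{2r+1}·2^n described in the context. Then neither (⟨P, b⟩, P) nor (⟨P, ba⟩, P) is a Shoda pair of G, where ⟨P, b⟩ (respectively ⟨P, ba⟩) denotes the subgroup generated by P and b (respectively by P and ba). -/

import Mathlib

open scoped Classical

namespace Paper

variable {G : Type*} [Group G] [Fintype G]

noncomputable instance : Fintype (Subgroup G) :=
  Fintype.ofInjective (fun H : Subgroup G => (H : Set G)) SetLike.coe_injective

/-- `M̂ = (1/|M|) ∑_{m ∈ M} m` in the rational group algebra `ℚ[G]`. -/
noncomputable def hat (M : Subgroup G) : MonoidAlgebra ℚ G :=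
  (Nat.card M : ℚ)⁻¹ • ∑ m : M, MonoidAlgebra.of ℚ G (m : G)

/-- `L` is a normal subgroup of `H` properly containing `K`. -/
def NormalOver (H K L : Subgroup G) : Prop :=
  L ≤ H ∧ K < L ∧ ∀ h ∈ H, ∀ g ∈ L, h⁻¹ * g * h ∈ L

/-- `L` is minimal among the normal subgroups of `H` properly containing `K`. -/
def MinimalOver (H K L : Subgroup G) : Prop :=
  NormalOver H K L ∧ ∀ L' : Subgroup G, NormalOver H K L' → L' ≤ L → L' = L

/-- `ε(H,K) = K̂` if `H = K`, and otherwise `∏_L (K̂ - L̂)`, the product running over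
the normal subgroups `L` of `H` minimal with respect to properly containing `K`
(all such factors commute pairwise, so the product is order-independent). -/
noncomputable def eps (H K : Subgroup G) : MonoidAlgebra ℚ G :=
  if H = K then hat K
  else (({L : Subgroup G | MinimalOver H K L}.toFinset).toList.map
    fun L => hat K - hat L).prod

/-- The subgroup `[H,g] = ⟨g⁻¹h⁻¹gh : h ∈ H⟩`. -/
def commSub (H : Subgroup G) (g : G) : Subgroup G :=
  Subgroup.closure {c : G | ∃ h ∈ H, c = g⁻¹ * h⁻¹ * g * h}

/-- The quotient `H/K` is cyclic (elementwise formulation: some `h ∈ H` is such that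
every `g ∈ H` lies in a coset `h^m K`). -/
def CyclicQuot (H K : Subgroup G) : Prop :=
  ∃ h ∈ H, ∀ g ∈ H, ∃ m : ℤ, (h ^ m)⁻¹ * g ∈ K

/-- `K` is normal in `H` (elementwise formulation). -/
def NormalIn (H K : Subgroup G) : Prop :=
  ∀ h ∈ H, ∀ g ∈ K, h⁻¹ * g * h ∈ K

/-- `(H,K)` is a Shoda pair of `G`. -/
def IsShodaPair (H K : Subgroup G) : Prop :=
  K ≤ H ∧ NormalIn H K ∧ CyclicQuot H K ∧
    ∀ g : G, commSub H g ⊓ H ≤ K → g ∈ H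

/-- `(H,K)` is a strong Shoda pair of `G`: conditions (SS1), (SS2), (SS3).
Maximal abelianness of `H/K` in `N_G(K)/K` is phrased via the Galois correspondence
between subgroups of `N_G(K)/K` and subgroups of `G` lying between `K` and `N_G(K)`. -/
def IsStrongShodaPair (H K : Subgroup G) : Prop :=
  -- (SS1): `H` is a normal subgroup of `N_G(K)`
  (H ≤ Subgroup.normalizer (K : Set G) ∧ ∀ g ∈ Subgroup.normalizer (K : Set G), ∀ h ∈ H, g⁻¹ * h * g ∈ H) ∧
  -- (SS2): `H/K` is cyclic and a maximal abelian subgroup of `N_G(K)/K`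
  (CyclicQuot H K ∧
    (∀ h₁ ∈ H, ∀ h₂ ∈ H, h₁⁻¹ * h₂⁻¹ * h₁ * h₂ ∈ K) ∧
    ∀ C : Subgroup G, K ≤ C → C ≤ Subgroup.normalizer (K : Set G) →
      (∀ c₁ ∈ C, ∀ c₂ ∈ C, c₁⁻¹ * c₂⁻¹ * c₁ * c₂ ∈ K) → H ≤ C → C = H) ∧
  -- (SS3): `ε(H,K)·(g⁻¹ ε(H,K) g) = 0` for `g ∉ N_G(K)`
  (∀ g : G, g ∉ Subgroup.normalizer (K : Set G) →
    eps H K * (MonoidAlgebra.of ℚ G g⁻¹ * eps H K * MonoidAlgebra.of ℚ G g) = 0)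


/-- The data of the group `G = P ⋊ D_{2^n}` of order `p^{2r+1}·2^n`: an odd prime
`p ≡ 1 (mod 4)`, `r ≥ 1`, `n ≥ 3` with `2^{n-1}` the exact power of `2` dividing
`p - 1`, an integer `k` of multiplicative order `2^{n-1}` modulo `p` with inverse `q`
modulo `p`, and generators `x, y₁, …, y_r, z₁, …, z_r, a, b` of `G` subject to the
listed relations (commutator convention `[u,v] = u⁻¹v⁻¹uv`). -/
structure GData (G : Type*) [Group G] [Fintype G] where
  p : ℕ
  r : ℕ
  n : ℕ
  k : ℕ
  q : ℕ
  x : G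
  y : Fin r → G
  z : Fin r → G
  a : G
  b : G
  hp : p.Prime
  hp4 : p % 4 = 1
  hr : 1 ≤ r
  hn : 3 ≤ n
  hdvd : 2 ^ (n - 1) ∣ p - 1
  hndvd : ¬ 2 ^ n ∣ p - 1
  hordk : orderOf ((k : ZMod p)) = 2 ^ (n - 1)
  hkq : ((k : ZMod p)) * (q : ZMod p) = 1
  hcard : Fintype.card G = p ^ (2 * r + 1) * 2 ^ n
  hgen : Subgroup.closure (({x, a, b} : Set G) ∪ Set.range y ∪ Set.range z) = ⊤
  hxp : x ^ p = 1
  hyp : ∀ i, y i ^ p = 1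
  hzp : ∀ i, z i ^ p = 1
  han : a ^ 2 ^ (n - 1) = 1
  hb2 : b ^ 2 = 1
  hxy : ∀ i, x⁻¹ * (y i)⁻¹ * x * y i = 1
  hxz : ∀ i, x⁻¹ * (z i)⁻¹ * x * z i = 1
  hyy : ∀ i j, (y i)⁻¹ * (y j)⁻¹ * y i * y j = 1
  hzz : ∀ i j, (z i)⁻¹ * (z j)⁻¹ * z i * z j = 1
  hyz : ∀ i, (y i)⁻¹ * (z i)⁻¹ * y i * z i = x
  hyz' : ∀ i j, i ≠ j → (y i)⁻¹ * (z j)⁻¹ * y i * z j = 1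
  hax : a⁻¹ * x⁻¹ * a * x = 1
  hay : ∀ i, a⁻¹ * (y i)⁻¹ * a * y i = (y i) ^ (1 - (k : ℤ))
  haz : ∀ i, a⁻¹ * (z i)⁻¹ * a * z i = (z i) ^ (1 - (q : ℤ))
  hbx : b⁻¹ * x⁻¹ * b * x = x ^ 2
  hby : ∀ i, b⁻¹ * (y i)⁻¹ * b * y i = z i * y i
  hbz : ∀ i, b⁻¹ * (z i)⁻¹ * b * z i = y i * z i
  hba : b⁻¹ * a⁻¹ * b * a = a ^ 2

variable {G : Type*} [Group G] [Fintype G]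

/-- The subgroup `P = ⟨x, y₁, …, y_r, z₁, …, z_r⟩` of `G`. -/
def GData.P (d : GData G) : Subgroup G :=
  Subgroup.closure (({d.x} : Set G) ∪ Set.range d.y ∪ Set.range d.z)

end Paper

/-!
`P` is a normal `p`-subgroup and `M = P⟨a⟩` is a normal subgroup of `G`; counting orders
shows `a ∉ P` and `b ∉ M`. For an involution `c ∉ M` the subgroup `H = P⟨c⟩ = P ∪ Pc` meets
`M` only in `P`. Since `M` is normal and contains `a`, `[H, a] ≤ M`, so `[H, a] ∩ H ≤ P`,
while `a ∉ H`: the Shoda condition fails at `g = a`. Both `b` and `ba` are such involutions.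
-/

namespace Paper

open Subgroup
open scoped Pointwise

section General

variable {G : Type*} [Group G]

theorem commute_of_commutator_eq_one {g h : G} (hgh : g⁻¹ * h⁻¹ * g * h = 1) : Commute g h :=
  calc g * h = h * g * (g⁻¹ * h⁻¹ * g * h) := by group
    _ = h * g := by rw [hgh, mul_one]

theorem conj_mem_of_commutator_mem {K : Subgroup G} {g s : G} (hs : s ∈ K)
    (hgs : g⁻¹ * s⁻¹ * g * s ∈ K) : g⁻¹ * s * g ∈ K := by
  rw [show g⁻¹ * s * g = s * (g⁻¹ * s⁻¹ * g * s)⁻¹ by group]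
  exact mul_mem hs (inv_mem hgs)

theorem mem_normalizer_closure_of_commutator_mem [Finite G] {S : Set G} {g : G}
    (h : ∀ s ∈ S, g⁻¹ * s⁻¹ * g * s ∈ closure S) : g ∈ normalizer (closure S : Set G) := by
  have hle : (closure S).map (MulAut.conj g⁻¹).toMonoidHom ≤ closure S := by
    rw [MonoidHom.map_closure, closure_le]
    rintro _ ⟨s, hs, rfl⟩
    simpa using conj_mem_of_commutator_mem (subset_closure hs) (h s hs)
  have hmap := eq_of_le_of_card_ge hle (card_map_of_injective (MulAut.conj g⁻¹).injective).ge
  simpa using inv_mem (mem_normalizer_iff_map_conj_eq.mpr hmap)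

theorem isPGroup_closure_of_pow_eq_one {p : ℕ} {S : Set G}
    (hcomm : ∀ x ∈ S, ∀ y ∈ S, x * y = y * x) (hp : ∀ s ∈ S, s ^ p = 1) :
    IsPGroup p (closure S) := by
  have := isMulCommutative_closure hcomm
  suffices ∀ g ∈ closure S, g ^ p = 1 from fun g ↦ ⟨1, Subtype.ext (by simpa using this g g.2)⟩
  intro g hg
  induction hg using closure_induction with
  | mem s hs => exact hp s hs
  | one => exact one_pow p
  | mul u v hu hv hu' hv' => rw [Commute.mul_pow (setLike_mul_comm hu hv), hu', hv', one_mul]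
  | inv u _ hu' => rw [inv_pow, hu', inv_one]

theorem card_sup_closure_singleton_le (K : Subgroup G) [K.Normal] {c : G} {t : ℕ} (ht : 0 < t)
    (hc : c ^ t = 1) : Nat.card (K ⊔ closure {c} : Subgroup G) ≤ Nat.card K * t :=
  calc Nat.card (K ⊔ closure {c} : Subgroup G)
      = Nat.card ((K : Set G) * (zpowers c : Set G)) := by
        rw [← normal_mul, zpowers_eq_closure]; rfl
    _ ≤ Nat.card K * Nat.card (zpowers c) := Set.natCard_mul_le
    _ ≤ Nat.card K * t := by
        rw [Nat.card_zpowers]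
        exact Nat.mul_le_mul_left _ (orderOf_le_of_pow_eq_one ht hc)

theorem sup_closure_singleton_inf_le {K M : Subgroup G} [K.Normal] (hKM : K ≤ M) {c : G}
    (hc : c ^ 2 = 1) (hcM : c ∉ M) : (K ⊔ closure {c}) ⊓ M ≤ K := by
  intro w hw
  obtain ⟨hwH, hwM⟩ := mem_inf.mp hw
  rw [← zpowers_eq_closure, ← SetLike.mem_coe, normal_mul] at hwH
  obtain ⟨u, hu, _, ⟨j, rfl⟩, rfl⟩ := hwH
  dsimp only at hwM ⊢
  have hcj : c ^ j ∈ M := by simpa using mul_mem (inv_mem (hKM hu)) hwM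
  rw [zpow_eq_zpow_emod' j hc] at hcj ⊢
  rcases Int.emod_two_eq_zero_or_one j with h | h
  · simpa [h] using hu
  · exact absurd (by simpa [h] using hcj) hcM

theorem not_isShodaPair_of_inf_le {H K M : Subgroup G} [M.Normal] (hHM : H ⊓ M ≤ K) {g : G}
    (hgM : g ∈ M) (hgK : g ∉ K) : ¬ IsShodaPair H K := by
  rintro ⟨-, -, -, hShoda⟩
  have hcomm : commSub H g ≤ M := (closure_le _).mpr <| by
    rintro _ ⟨h, -, rfl⟩
    rw [SetLike.mem_coe, show g⁻¹ * h⁻¹ * g * h = g⁻¹ * (h⁻¹ * g * h⁻¹⁻¹) by group]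
    exact mul_mem (inv_mem hgM) (Normal.conj_mem inferInstance g hgM h⁻¹)
  exact hgK (hHM ⟨hShoda g fun w hw ↦ hHM ⟨hw.2, hcomm hw.1⟩, hgM⟩)

end General

namespace GData

variable {G : Type*} [Group G] [Fintype G] (d : GData G)

def M : Subgroup G := d.P ⊔ closure {d.a}

theorem x_mem_P : d.x ∈ d.P := subset_closure (Or.inl (Or.inl rfl))

theorem y_mem_P (i : Fin d.r) : d.y i ∈ d.P := subset_closure (Or.inl (Or.inr ⟨i, rfl⟩))

theorem z_mem_P (i : Fin d.r) : d.z i ∈ d.P := subset_closure (Or.inr ⟨i, rfl⟩)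

theorem P_le_M : d.P ≤ d.M := le_sup_left

theorem a_mem_M : d.a ∈ d.M := mem_sup_right (mem_closure_singleton_self d.a)

theorem eq_top_of_P_le {S : Subgroup G} (hP : d.P ≤ S) (ha : d.a ∈ S) (hb : d.b ∈ S) : S = ⊤ := by
  rw [eq_top_iff, ← d.hgen, closure_le]
  rintro s (((rfl | rfl | rfl) | ⟨i, rfl⟩) | ⟨i, rfl⟩)
  · exact hP d.x_mem_P
  · exact ha
  · exact hb
  · exact hP (d.y_mem_P i)
  · exact hP (d.z_mem_P i)

theorem card_eq : Nat.card G = d.p ^ (2 * d.r + 1) * 2 ^ d.n := by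
  rw [Nat.card_eq_fintype_card, d.hcard]

theorem coprime_p_pow_two_pow (s t : ℕ) : (d.p ^ s).Coprime (2 ^ t) :=
  Nat.Coprime.pow s t (Nat.coprime_two_right.mpr (Nat.odd_iff.mpr (by have := d.hp4; omega)))

theorem a_mem_normalizer_P : d.a ∈ normalizer (d.P : Set G) :=
  mem_normalizer_closure_of_commutator_mem <| by
    rintro s ((rfl | ⟨i, rfl⟩) | ⟨i, rfl⟩)
    · rw [d.hax]; exact one_mem _
    · rw [d.hay i]; exact zpow_mem (d.y_mem_P i) _
    · rw [d.haz i]; exact zpow_mem (d.z_mem_P i) _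

theorem b_mem_normalizer_P : d.b ∈ normalizer (d.P : Set G) :=
  mem_normalizer_closure_of_commutator_mem <| by
    rintro s ((rfl | ⟨i, rfl⟩) | ⟨i, rfl⟩)
    · rw [d.hbx]; exact pow_mem d.x_mem_P _
    · rw [d.hby i]; exact mul_mem (d.z_mem_P i) (d.y_mem_P i)
    · rw [d.hbz i]; exact mul_mem (d.y_mem_P i) (d.z_mem_P i)

instance normal_P : d.P.Normal :=
  normalizer_eq_top_iff.mp (d.eq_top_of_P_le le_normalizer d.a_mem_normalizer_P d.b_mem_normalizer_P)

theorem b_mem_normalizer_M : d.b ∈ normalizer (d.M : Set G) := by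
  rw [M, ← closure_eq d.P, ← Subgroup.closure_union]
  refine mem_normalizer_closure_of_commutator_mem ?_
  rintro s (hs | rfl)
  · refine subset_closure (Or.inl (mul_mem ?_ hs))
    simpa using d.normal_P.conj_mem _ (inv_mem hs) d.b⁻¹
  · rw [d.hba]
    exact pow_mem (Subgroup.subset_closure (Set.mem_union_right _ (Set.mem_singleton d.a))) 2

instance normal_M : d.M.Normal :=
  normalizer_eq_top_iff.mp
    (d.eq_top_of_P_le (d.P_le_M.trans le_normalizer) (le_normalizer d.a_mem_M) d.b_mem_normalizer_M)

theorem isPGroup_P : IsPGroup d.p d.P := by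
  have hE : IsPGroup d.p (closure ({d.x} ∪ Set.range d.y)) := by
    refine isPGroup_closure_of_pow_eq_one ?_ ?_
    · rintro _ (rfl | ⟨i, rfl⟩) _ (rfl | ⟨j, rfl⟩)
      · rfl
      · exact (commute_of_commutator_eq_one (d.hxy j)).eq
      · exact (commute_of_commutator_eq_one (d.hxy i)).symm.eq
      · exact (commute_of_commutator_eq_one (d.hyy i j)).eq
    · rintro _ (rfl | ⟨i, rfl⟩)
      · exact d.hxp
      · exact d.hyp i
  have hD : IsPGroup d.p (closure (Set.range d.z)) := by
    refine isPGroup_closure_of_pow_eq_one ?_ ?_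
    · rintro _ ⟨i, rfl⟩ _ ⟨j, rfl⟩
      exact (commute_of_commutator_eq_one (d.hzz i j)).eq
    · rintro _ ⟨i, rfl⟩
      exact d.hzp i
  have hDE : closure (Set.range d.z) ≤ normalizer (closure ({d.x} ∪ Set.range d.y) : Set G) := by
    refine (closure_le _).mpr ?_
    rintro _ ⟨j, rfl⟩
    refine mem_normalizer_closure_of_commutator_mem fun s hs ↦ ?_
    rw [show (d.z j)⁻¹ * s⁻¹ * d.z j * s = (s⁻¹ * (d.z j)⁻¹ * s * d.z j)⁻¹ by group]
    refine inv_mem ?_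
    rcases hs with rfl | ⟨i, rfl⟩
    · rw [d.hxz j]; exact one_mem _
    · by_cases hij : i = j
      · subst hij; rw [d.hyz]; exact Subgroup.subset_closure (Or.inl rfl)
      · rw [d.hyz' i j hij]; exact one_mem _
  rw [GData.P, Subgroup.closure_union]
  exact hE.to_sup_of_normal_left' hD hDE

theorem card_P_le : Nat.card d.P ≤ d.p ^ (2 * d.r + 1) := by
  have : Fact d.p.Prime := ⟨d.hp⟩
  obtain ⟨s, hs⟩ := IsPGroup.iff_card.mp d.isPGroup_P
  have hdvd : d.p ^ s ∣ d.p ^ (2 * d.r + 1) * 2 ^ d.n := hs ▸ d.card_eq ▸ card_subgroup_dvd_card d.P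
  rw [hs]
  exact Nat.le_of_dvd (by have := d.hp.pos; positivity)
    ((d.coprime_p_pow_two_pow s d.n).dvd_of_dvd_mul_right hdvd)

theorem sup_closure_ne_top {c : G} {t : ℕ} (ht : 0 < t) (htn : t < 2 ^ d.n) (hc : c ^ t = 1) :
    d.P ⊔ closure {c} ≠ ⊤ := by
  intro htop
  have hcard := card_sup_closure_singleton_le d.P ht hc
  rw [htop, card_top, d.card_eq] at hcard
  have := Nat.mul_le_mul_right t d.card_P_le
  have := pow_pos d.hp.pos (2 * d.r + 1)
  nlinarith

theorem b_not_mem_M : d.b ∉ d.M := fun hb ↦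
  d.sup_closure_ne_top (Nat.two_pow_pos _) (Nat.pow_lt_pow_right one_lt_two (by have := d.hn; omega))
    d.han (d.eq_top_of_P_le d.P_le_M d.a_mem_M hb)

theorem a_not_mem_P : d.a ∉ d.P := by
  intro ha
  obtain ⟨s, hs⟩ := d.isPGroup_P ⟨d.a, ha⟩
  have ha1 : d.a = 1 := by
    have := pow_gcd_eq_one.mpr ⟨by simpa using congrArg Subtype.val hs, d.han⟩
    rwa [(d.coprime_p_pow_two_pow s (d.n - 1)).gcd_eq_one, pow_one] at this
  have h2n : 2 < 2 ^ d.n := by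
    simpa using Nat.pow_lt_pow_right one_lt_two (by have := d.hn; omega : 1 < d.n)
  exact d.sup_closure_ne_top two_pos h2n d.hb2
    (d.eq_top_of_P_le le_sup_left (ha1 ▸ one_mem _) (mem_sup_right (mem_closure_singleton_self _)))

theorem sq_b_mul_a : (d.b * d.a) ^ 2 = 1 := by
  have hb : d.b⁻¹ = d.b := inv_eq_of_mul_eq_one_right (by rw [← sq, d.hb2])
  calc (d.b * d.a) ^ 2 = d.b⁻¹ * d.a * d.b * d.a := by rw [sq, hb]; group
    _ = d.a * (d.b⁻¹ * d.a⁻¹ * d.b * d.a)⁻¹ * d.a := by group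
    _ = 1 := by rw [d.hba]; group

theorem b_mul_a_not_mem_M : d.b * d.a ∉ d.M := fun hba ↦
  d.b_not_mem_M (by simpa using mul_mem hba (inv_mem d.a_mem_M))

theorem not_isShodaPair_sup_closure {c : G} (hc : c ^ 2 = 1) (hcM : c ∉ d.M) :
    ¬ IsShodaPair (d.P ⊔ closure {c}) d.P :=
  not_isShodaPair_of_inf_le (sup_closure_singleton_inf_le d.P_le_M hc hcM) d.a_mem_M d.a_not_mem_P

end GData

end Paper

/-- Neither `(⟨P,b⟩, P)` nor `(⟨P,ba⟩, P)` is a Shoda pair of `G`. -/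
theorem stmt10 {G : Type*} [Group G] [Fintype G] (d : Paper.GData G) :
    ¬ Paper.IsShodaPair (d.P ⊔ Subgroup.closure {d.b}) d.P ∧
    ¬ Paper.IsShodaPair (d.P ⊔ Subgroup.closure {d.b * d.a}) d.P :=
  ⟨d.not_isShodaPair_sup_closure d.hb2 d.b_not_mem_M,
    d.not_isShodaPair_sup_closure d.sq_b_mul_a d.b_mul_a_not_mem_M⟩
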